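/- Let A = (V, μ, η, α) be a unital hom-associative algebra over a field K with unit e₂ = η(1) satisfying α(e₂) = e₂, and let K₁(A) = (Ṽ, μ₁, η₁, Δ₁, ε₁, α₁) be the first Kaplansky construction on Ṽ = K·e₁ ⊕ V. Then the unital hom-infinitesimal relation holds on V: for all x, y ∈ V, Δ₁(μ(x,y)) = (μ₁⊗α₁)((α₁⊗Δ₁)(x⊗y)) + (α₁⊗μ₁)((Δ₁⊗α₁)(x⊗y)) − α₁(α₁(x))⊗α₁(y), i.e. Δ₁(μ(x,y)) = α(μ(x,y))⊗e₁ + e₁⊗α(μ(x,y)) − e₂⊗α(μ(x,y)) equals the right-hand side. -/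

import Mathlib

/-!
Evaluate both summands of the right-hand side on `x ⊗ y` with `x, y ∈ V`. In the first, the
terms `αx ⊗ α²y` and `μ(αx, e₂) ⊗ α²y` cancel because `e₂` is a right unit, leaving
`μ(αx, αy) ⊗ e₁`. The second is `α²x ⊗ αy + e₁ ⊗ μ(αx, αy) − α(e₂) ⊗ μ(αx, αy)`. Since `α` is
multiplicative and fixes `e₂`, the sum minus `α²x ⊗ αy` is `Δ₁(μ(x, y))`.
-/

open TensorProduct

namespace Stmt6

variable {K V : Type*} [Field K] [AddCommGroup V] [Module K V]

/-- The extended space `Ṽ = K·e₁ ⊕ V`, realized as `K × V`, with `e₁ = (1,0)`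
and `V` embedded via `x ↦ (0,x)`. -/
abbrev Vt (K V : Type*) := K × V

/-- The embedding `V → Ṽ`. -/
def iota : V →ₗ[K] Vt K V := LinearMap.inr K K V

/-- The adjoined unit `e₁ ∈ Ṽ`. -/
def e₁ : Vt K V := (1, 0)

/-- The Kaplansky multiplication `μ₁` on `Ṽ`: `e₁` is a two-sided unit and
`μ₁` restricts to `μ` on `V`. -/
def mu₁ (μ : V →ₗ[K] V →ₗ[K] V) : Vt K V →ₗ[K] Vt K V →ₗ[K] Vt K V :=
  LinearMap.mk₂ K
    (fun p q => (p.1 * q.1, p.1 • q.2 + q.1 • p.2 + μ p.2 q.2))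
    (by intro p p' q; ext <;>
      simp [add_mul, add_smul, smul_add, map_add] <;> abel)
    (by intro c p q; ext <;>
      simp [mul_assoc, mul_smul, smul_add, smul_comm q.1 c, map_smul])
    (by intro p q q'; ext <;>
      simp [mul_add, add_smul, smul_add, map_add] <;> abel)
    (by intro c p q; ext <;>
      simp [mul_left_comm, mul_smul, smul_add, smul_comm p.1 c, map_smul])

/-- The twisting map `α₁` on `Ṽ`: `α₁(e₁) = e₁`, `α₁ = α` on `V`. -/
def alpha₁ (α : V →ₗ[K] V) : Vt K V →ₗ[K] Vt K V := LinearMap.prodMap LinearMap.id α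

/-- The Kaplansky comultiplication `Δ₁` on `Ṽ`: `Δ₁(e₁) = e₁ ⊗ e₁` and
`Δ₁(x) = α(x)⊗e₁ + e₁⊗α(x) − e₂⊗α(x)` for `x ∈ V`. -/
noncomputable def Delta₁ (α : V →ₗ[K] V) (e₂ : V) :
    Vt K V →ₗ[K] (Vt K V) ⊗[K] (Vt K V) :=
  (LinearMap.fst K K V).smulRight ((e₁ : Vt K V) ⊗ₜ[K] (e₁ : Vt K V))
    + ((TensorProduct.mk K (Vt K V) (Vt K V)).flip e₁).comp
        ((iota : V →ₗ[K] Vt K V).comp (α.comp (LinearMap.snd K K V)))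
    + (TensorProduct.mk K (Vt K V) (Vt K V) e₁).comp
        ((iota : V →ₗ[K] Vt K V).comp (α.comp (LinearMap.snd K K V)))
    - (TensorProduct.mk K (Vt K V) (Vt K V) (iota e₂)).comp
        ((iota : V →ₗ[K] Vt K V).comp (α.comp (LinearMap.snd K K V)))

section Kaplansky

variable (μ : V →ₗ[K] V →ₗ[K] V) (α : V →ₗ[K] V) (e₂ : V)

theorem Delta₁_iota (v : V) :
    Delta₁ α e₂ (iota v) = iota (α v) ⊗ₜ[K] e₁ + e₁ ⊗ₜ[K] iota (α v) - iota e₂ ⊗ₜ[K] iota (α v) := by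
  simp [Delta₁, iota, e₁]

theorem alpha₁_iota (v : V) : alpha₁ α (iota v) = iota (α v) := by
  simp [alpha₁, iota]

theorem alpha₁_e₁ : alpha₁ α (e₁ : Vt K V) = e₁ := by
  simp [alpha₁, e₁]

theorem mu₁_iota_iota (u v : V) : mu₁ μ (iota u) (iota v) = iota (μ u v) := by
  simp [mu₁, iota]

theorem mu₁_e₁_left (u : Vt K V) : mu₁ μ e₁ u = u := by
  ext <;> simp [mu₁, e₁]

theorem mu₁_e₁_right (u : Vt K V) : mu₁ μ u e₁ = u := by
  ext <;> simp [mu₁, e₁]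

theorem map_lift_mu₁_alpha₁_assoc_symm_map_alpha₁_Delta₁_iota_tmul_iota
    (hunitr : ∀ x : V, μ x e₂ = x) (x y : V) :
    TensorProduct.map (TensorProduct.lift (mu₁ μ)) (alpha₁ α)
        ((TensorProduct.assoc K (Vt K V) (Vt K V) (Vt K V)).symm
          (TensorProduct.map (alpha₁ α) (Delta₁ α e₂) (iota x ⊗ₜ[K] iota y)))
      = iota (μ (α x) (α y)) ⊗ₜ[K] e₁ := by
  simp only [TensorProduct.map_tmul, Delta₁_iota, alpha₁_iota, TensorProduct.tmul_add,
    TensorProduct.tmul_sub, map_add, map_sub, TensorProduct.assoc_symm_tmul,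
    TensorProduct.lift.tmul, mu₁_iota_iota, mu₁_e₁_right, alpha₁_e₁, hunitr]
  abel

theorem map_alpha₁_lift_mu₁_assoc_map_Delta₁_alpha₁_iota_tmul_iota (x y : V) :
    TensorProduct.map (alpha₁ α) (TensorProduct.lift (mu₁ μ))
        ((TensorProduct.assoc K (Vt K V) (Vt K V) (Vt K V))
          (TensorProduct.map (Delta₁ α e₂) (alpha₁ α) (iota x ⊗ₜ[K] iota y)))
      = iota (α (α x)) ⊗ₜ[K] iota (α y) + e₁ ⊗ₜ[K] iota (μ (α x) (α y))
        - iota (α e₂) ⊗ₜ[K] iota (μ (α x) (α y)) := by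
  simp only [TensorProduct.map_tmul, Delta₁_iota, alpha₁_iota, TensorProduct.add_tmul,
    TensorProduct.sub_tmul, map_add, map_sub, TensorProduct.assoc_tmul,
    TensorProduct.lift.tmul, mu₁_iota_iota, mu₁_e₁_left, alpha₁_e₁]

end Kaplansky

theorem stmt_6_general (μ : V →ₗ[K] V →ₗ[K] V) (α : V →ₗ[K] V) (e₂ : V)
    (hmult : ∀ x y : V, α (μ x y) = μ (α x) (α y))
    (hunitr : ∀ x : V, μ x e₂ = x)
    (hαe : α e₂ = e₂) :
    ∀ x y : V,
      Delta₁ α e₂ (iota (μ x y))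
        = TensorProduct.map (TensorProduct.lift (mu₁ μ)) (alpha₁ α)
            ((TensorProduct.assoc K (Vt K V) (Vt K V) (Vt K V)).symm
              (TensorProduct.map (alpha₁ α) (Delta₁ α e₂)
                ((iota x : Vt K V) ⊗ₜ[K] (iota y : Vt K V))))
          + TensorProduct.map (alpha₁ α) (TensorProduct.lift (mu₁ μ))
              ((TensorProduct.assoc K (Vt K V) (Vt K V) (Vt K V))
                (TensorProduct.map (Delta₁ α e₂) (alpha₁ α)
                  ((iota x : Vt K V) ⊗ₜ[K] (iota y : Vt K V))))
          - (iota (α (α x)) : Vt K V) ⊗ₜ[K] (iota (α y) : Vt K V) := by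
  intro x y
  rw [map_lift_mu₁_alpha₁_assoc_symm_map_alpha₁_Delta₁_iota_tmul_iota μ α e₂ hunitr,
    map_alpha₁_lift_mu₁_assoc_map_Delta₁_alpha₁_iota_tmul_iota, Delta₁_iota, hαe, hmult]
  abel

/-- For a unital hom-associative algebra `(V, μ, e₂, α)` with
`α(e₂) = e₂`, the first Kaplansky construction `K₁(A)` satisfies the unital
hom-infinitesimal relation on `V`: for all `x, y ∈ V`,
`Δ₁(μ(x,y)) = (μ₁⊗α₁)((α₁⊗Δ₁)(x⊗y)) + (α₁⊗μ₁)((Δ₁⊗α₁)(x⊗y)) − α₁²(x) ⊗ α₁(y)`. -/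
theorem stmt_6 (μ : V →ₗ[K] V →ₗ[K] V) (α : V →ₗ[K] V) (e₂ : V)
    (hmult : ∀ x y : V, α (μ x y) = μ (α x) (α y))
    (hassoc : ∀ x y z : V, μ (α x) (μ y z) = μ (μ x y) (α z))
    (hunitl : ∀ x : V, μ e₂ x = x) (hunitr : ∀ x : V, μ x e₂ = x)
    (hαe : α e₂ = e₂) :
    ∀ x y : V,
      Delta₁ α e₂ (iota (μ x y))
        = TensorProduct.map (TensorProduct.lift (mu₁ μ)) (alpha₁ α)
            ((TensorProduct.assoc K (Vt K V) (Vt K V) (Vt K V)).symm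
              (TensorProduct.map (alpha₁ α) (Delta₁ α e₂)
                ((iota x : Vt K V) ⊗ₜ[K] (iota y : Vt K V))))
          + TensorProduct.map (alpha₁ α) (TensorProduct.lift (mu₁ μ))
              ((TensorProduct.assoc K (Vt K V) (Vt K V) (Vt K V))
                (TensorProduct.map (Delta₁ α e₂) (alpha₁ α)
                  ((iota x : Vt K V) ⊗ₜ[K] (iota y : Vt K V))))
          - (iota (α (α x)) : Vt K V) ⊗ₜ[K] (iota (α y) : Vt K V) :=
  stmt_6_general μ α e₂ hmult hunitr hαe

end Stmt6
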